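/- Let 0 ≤ α < 1, let f ∈ A be locally univalent on Δ with f(z) ≠ 0 for z ∈ Δ∖{0}, and let φ be a Schwarz function such that f'(z)/f(z) = (1 − φ(z))/(z(1 + (1−2α)φ(z))) for all z ∈ Δ∖{0}. Then for all z ∈ Δ∖{0}: |f''(z)/f'(z)| ≤ 2(1−α)/(1 − |1−2α||z|) + 2(1−α)(1+|z|)/((1 − |1−2α||z|)(1 − |z|²)). -/

import Mathlib

open Complex Metric

private noncomputable def mob (a x : ℂ) : ℂ := (x - a) / (1 - (starRingEnd ℂ) a * x)

private lemma normSq_eq_norm_sq' (z : ℂ) : Complex.normSq z = ‖z‖^2 := by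
  rw [Complex.normSq_eq_norm_sq]

private lemma mob_denom_ne {a x : ℂ} (h : ‖a‖ * ‖x‖ < 1) :
    (1 : ℂ) - (starRingEnd ℂ) a * x ≠ 0 := by
  intro H
  have h1 : (starRingEnd ℂ) a * x = 1 := by linear_combination -H
  have := congrArg (‖·‖) h1
  simp only [norm_mul, RCLike.norm_conj, norm_one] at this
  linarith

private lemma mob_maps {a x : ℂ} (ha : ‖a‖ < 1) (hx : ‖x‖ < 1) : ‖mob a x‖ < 1 := by
  have hax : ‖a‖ * ‖x‖ < 1 := by nlinarith [norm_nonneg a, norm_nonneg x]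
  have hd := mob_denom_ne hax
  have key : Complex.normSq (1 - (starRingEnd ℂ) a * x) - Complex.normSq (x - a)
      = (1 - Complex.normSq a) * (1 - Complex.normSq x) := by
    simp [Complex.normSq_apply, Complex.sub_re, Complex.sub_im, Complex.mul_re, Complex.mul_im]
    ring
  rw [mob, norm_div, div_lt_one (norm_pos_iff.mpr hd)]
  have h1 : Complex.normSq (x - a) < Complex.normSq (1 - (starRingEnd ℂ) a * x) := by
    have e1 := normSq_eq_norm_sq' a; have e2 := normSq_eq_norm_sq' x
    rw [e1, e2] at key
    have q1 : ‖a‖^2 < 1 := by nlinarith [norm_nonneg a]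
    have q2 : ‖x‖^2 < 1 := by nlinarith [norm_nonneg x]
    have pos : 0 < (1 - ‖a‖^2) * (1 - ‖x‖^2) := mul_pos (by linarith) (by linarith)
    linarith
  rw [normSq_eq_norm_sq', normSq_eq_norm_sq'] at h1
  nlinarith [norm_nonneg (x - a), norm_nonneg (1 - (starRingEnd ℂ) a * x)]

private lemma mob_hasDerivAt {a x : ℂ} (h : ‖a‖ * ‖x‖ < 1) :
    HasDerivAt (mob a) ((1 - (starRingEnd ℂ) a * a) / (1 - (starRingEnd ℂ) a * x)^2) x := by
  have hd := mob_denom_ne h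
  have h1 : HasDerivAt (fun y : ℂ => y - a) 1 x := (hasDerivAt_id x).sub_const a
  have h2 : HasDerivAt (fun y : ℂ => 1 - (starRingEnd ℂ) a * y) (-((starRingEnd ℂ) a)) x := by
    simpa using ((hasDerivAt_id x).const_mul ((starRingEnd ℂ) a)).const_sub 1
  have : HasDerivAt (mob a) _ x := h1.div h2 hd
  convert this using 1
  field_simp
  ring

private lemma mob_self (b : ℂ) : mob b b = 0 := by simp [mob]

/-- Schwarz–Pick. -/
private lemma schwarz_pick {φ : ℂ → ℂ} (hd : DifferentiableOn ℂ φ (ball (0:ℂ) 1))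
    (hm : ∀ w : ℂ, ‖w‖ < 1 → ‖φ w‖ < 1) {z : ℂ} (hz : ‖z‖ < 1) :
    ‖deriv φ z‖ * (1 - ‖z‖^2) ≤ 1 - ‖φ z‖^2 := by
  set b := φ z with hb_def
  have hb : ‖b‖ < 1 := hm z hz
  set g : ℂ → ℂ := fun x => mob b (φ (mob (-z) x)) with hg_def
  -- facts about τ = mob (-z)
  have hτ : ∀ x : ℂ, ‖x‖ < 1 → ‖mob (-z) x‖ < 1 := fun x hx => mob_maps (by simpa using hz) hx
  have hgd : ∀ x ∈ ball (0:ℂ) 1, HasDerivAt g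
      ((1 - (starRingEnd ℂ) b * b) / (1 - (starRingEnd ℂ) b * φ (mob (-z) x))^2 *
        (deriv φ (mob (-z) x) *
          ((1 - (starRingEnd ℂ) (-z) * (-z)) / (1 - (starRingEnd ℂ) (-z) * x)^2))) x := by
    intro x hx
    rw [mem_ball_zero_iff] at hx
    have h1 : HasDerivAt (mob (-z))
        ((1 - (starRingEnd ℂ) (-z) * (-z)) / (1 - (starRingEnd ℂ) (-z) * x)^2) x :=
      mob_hasDerivAt (by simp only [norm_neg]; nlinarith [norm_nonneg z, norm_nonneg x])
    have hy : ‖mob (-z) x‖ < 1 := hτ x hx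
    have h2 : HasDerivAt φ (deriv φ (mob (-z) x)) (mob (-z) x) :=
      (hd.differentiableAt (isOpen_ball.mem_nhds (mem_ball_zero_iff.2 hy))).hasDerivAt
    have hφy : ‖φ (mob (-z) x)‖ < 1 := hm _ hy
    have h3 : HasDerivAt (mob b)
        ((1 - (starRingEnd ℂ) b * b) / (1 - (starRingEnd ℂ) b * φ (mob (-z) x))^2)
        (φ (mob (-z) x)) :=
      mob_hasDerivAt (by nlinarith [norm_nonneg b, norm_nonneg (φ (mob (-z) x))])
    exact h3.comp x (h2.comp x h1)
  have hgdiff : DifferentiableOn ℂ g (ball (0:ℂ) 1) :=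
    fun x hx => ((hgd x hx).differentiableAt).differentiableWithinAt
  have hgmaps : Set.MapsTo g (ball (0:ℂ) 1) (ball (0:ℂ) 1) := by
    intro x hx
    rw [mem_ball_zero_iff] at hx ⊢
    exact mob_maps hb (hm _ (hτ x hx))
  have hg0 : g 0 = 0 := by
    have : mob (-z) 0 = z := by simp [mob]
    rw [hg_def]; simp only [this, ← hb_def, mob_self]
  have h1 := Complex.norm_deriv_le_one_of_mapsTo_ball hgdiff
    (by rw [hg0]; exact hgmaps.mono_right ball_subset_closedBall) one_pos
  have hmz : mob (-z) 0 = z := by simp [mob]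
  have hder : deriv g 0 = (1 - (starRingEnd ℂ) b * b) / (1 - (starRingEnd ℂ) b * b)^2 *
      (deriv φ z * (1 - (starRingEnd ℂ) z * z)) := by
    have h2 := (hgd 0 (by simp)).deriv
    rw [h2, hmz, ← hb_def]
    simp [map_neg]
  have hsb : (1 : ℂ) - (starRingEnd ℂ) b * b = ((1 - ‖b‖^2 : ℝ) : ℂ) := by
    rw [← Complex.normSq_eq_conj_mul_self, normSq_eq_norm_sq']; push_cast; ring
  have hsz : (1 : ℂ) - (starRingEnd ℂ) z * z = ((1 - ‖z‖^2 : ℝ) : ℂ) := by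
    rw [← Complex.normSq_eq_conj_mul_self, normSq_eq_norm_sq']; push_cast; ring
  have hb2 : (0:ℝ) < 1 - ‖b‖^2 := by nlinarith [norm_nonneg b]
  have hz2 : (0:ℝ) < 1 - ‖z‖^2 := by nlinarith [norm_nonneg z]
  have hnorm : ‖deriv g 0‖ = ‖deriv φ z‖ * (1 - ‖z‖^2) / (1 - ‖b‖^2) := by
    rw [hder, hsb, hsz]
    rw [norm_mul, norm_div, norm_pow, norm_mul, Complex.norm_real, Complex.norm_real,
      Real.norm_eq_abs, Real.norm_eq_abs, abs_of_pos hb2, abs_of_pos hz2]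
    have hbne : (1 - ‖b‖^2) ≠ 0 := ne_of_gt hb2
    have e : ∀ A B : ℝ, A ≠ 0 → A / A^2 * B = B / A := by
      intro A B hA; rw [pow_two, div_mul_cancel_left₀ hA, inv_mul_eq_div]
    exact e _ _ hbne
  rw [hnorm, div_le_one hb2] at h1
  exact h1

private lemma one_add_ne {w : ℂ} (h : ‖w‖ < 1) : (1 : ℂ) + w ≠ 0 := by
  intro H
  have : w = -1 := by linear_combination H
  rw [this] at h; simp at h

private lemma one_sub_ne {w : ℂ} (h : ‖w‖ < 1) : (1 : ℂ) - w ≠ 0 := by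
  intro H
  have : w = 1 := by linear_combination -H
  rw [this] at h; simp at h

set_option maxHeartbeats 1000000 in
/-- Pointwise estimate for the pre-Schwarzian derivative via the Schwarz–Pick lemma. -/
theorem preSchwarzian_estimate_via_schwarz
    (α : ℝ) (hα0 : 0 ≤ α) (hα1 : α < 1)
    (f : ℂ → ℂ)
    (hf : AnalyticOnNhd ℂ f (Metric.ball (0:ℂ) 1))
    (hf0 : f 0 = 0) (hf'0 : deriv f 0 = 1)
    (hlu : ∀ z : ℂ, ‖z‖ < 1 → deriv f z ≠ 0)
    (hfne : ∀ z : ℂ, ‖z‖ < 1 → z ≠ 0 → f z ≠ 0)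
    (φ : ℂ → ℂ)
    (hφ : AnalyticOnNhd ℂ φ (Metric.ball (0:ℂ) 1))
    (hφ0 : φ 0 = 0)
    (hφlt : ∀ z : ℂ, ‖z‖ < 1 → ‖φ z‖ < 1)
    (heq : ∀ z : ℂ, ‖z‖ < 1 → z ≠ 0 →
      deriv f z / f z = (1 - φ z) / (z * (1 + (1 - 2 * (α : ℂ)) * φ z))) :
    ∀ z : ℂ, ‖z‖ < 1 → z ≠ 0 →
      ‖deriv (deriv f) z / deriv f z‖ ≤
        2 * (1 - α) / (1 - |1 - 2 * α| * ‖z‖) +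
        2 * (1 - α) * (1 + ‖z‖) /
          ((1 - |1 - 2 * α| * ‖z‖) * (1 - ‖z‖ ^ 2)) := by
  intro z hz hz0
  set c : ℂ := 1 - 2*(α:ℂ) with hc_def
  have hc_real : c = ((1 - 2*α : ℝ) : ℂ) := by rw [hc_def]; push_cast; ring
  have hck : ‖c‖ = |1 - 2*α| := by rw [hc_real, Complex.norm_real, Real.norm_eq_abs]
  have hk1 : |1 - 2*α| ≤ 1 := abs_le.mpr ⟨by linarith, by linarith⟩
  have hk0 : (0:ℝ) ≤ |1 - 2*α| := abs_nonneg _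
  have hφd : DifferentiableOn ℂ φ (Metric.ball (0:ℂ) 1) :=
    fun x hx => ((hφ x hx).differentiableAt).differentiableWithinAt
  -- Schwarz lemma
  have hmaps : Set.MapsTo φ (Metric.ball (0:ℂ) 1) (Metric.ball (0:ℂ) 1) := by
    intro x hx
    rw [Metric.mem_ball, dist_zero_right] at hx ⊢
    exact hφlt x hx
  have hschwarz : ‖φ z‖ ≤ ‖z‖ := by
    have := Complex.norm_le_norm_of_mapsTo_ball hφd (hmaps.mono_right Metric.ball_subset_closedBall) hφ0
      (z := z) hz
    simpa using this
  -- Schwarz–Pick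
  have hpick : ‖deriv φ z‖ * (1 - ‖z‖^2) ≤ 1 - ‖φ z‖^2 := schwarz_pick hφd hφlt hz
  -- nonvanishing
  have hφz1 : ‖φ z‖ < 1 := hφlt z hz
  have hfz : f z ≠ 0 := hfne z hz hz0
  have hNz : (1:ℂ) - φ z ≠ 0 := one_sub_ne hφz1
  have hcφnorm : ‖c * φ z‖ < 1 := by
    rw [norm_mul, hck]
    nlinarith [norm_nonneg (φ z)]
  have hcφ : (1:ℂ) + c * φ z ≠ 0 := one_add_ne hcφnorm
  have hDz : z * (1 + c * φ z) ≠ 0 := mul_ne_zero hz0 hcφ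
  -- local identity deriv f = h near z
  set h : ℂ → ℂ := fun w => f w * ((1 - φ w) / (w * (1 + c * φ w))) with hh_def
  have hUopen : IsOpen (Metric.ball (0:ℂ) 1 ∩ {(0:ℂ)}ᶜ) :=
    Metric.isOpen_ball.inter isOpen_compl_singleton
  have hzU : z ∈ Metric.ball (0:ℂ) 1 ∩ {(0:ℂ)}ᶜ :=
    ⟨by rwa [Metric.mem_ball, dist_zero_right], hz0⟩
  have hev : deriv f =ᶠ[nhds z] h := by
    filter_upwards [hUopen.mem_nhds hzU] with w hw
    have hw1 : ‖w‖ < 1 := by have := hw.1; rwa [Metric.mem_ball, dist_zero_right] at this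
    have hw0 : w ≠ 0 := hw.2
    have he := heq w hw1 hw0
    rw [div_eq_iff (hfne w hw1 hw0)] at he
    rw [hh_def]
    simp only
    rw [he]
    ring
  -- derivatives
  have hφz' : HasDerivAt φ (deriv φ z) z :=
    ((hφ z (by rwa [Metric.mem_ball, dist_zero_right])).differentiableAt).hasDerivAt
  have hfz' : HasDerivAt f (deriv f z) z :=
    ((hf z (by rwa [Metric.mem_ball, dist_zero_right])).differentiableAt).hasDerivAt
  have hN : HasDerivAt (fun w => (1:ℂ) - φ w) (-(deriv φ z)) z := hφz'.const_sub 1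
  have hD : HasDerivAt (fun w => w * (1 + c * φ w))
      (1 * (1 + c * φ z) + z * (c * deriv φ z)) z :=
    (hasDerivAt_id z).mul ((hφz'.const_mul c).const_add 1)
  have hq : HasDerivAt (fun w => (1 - φ w) / (w * (1 + c * φ w)))
      ((-(deriv φ z) * (z * (1 + c * φ z)) -
        (1 - φ z) * (1 * (1 + c * φ z) + z * (c * deriv φ z))) / (z * (1 + c * φ z))^2) z :=
    hN.div hD hDz
  have hH : HasDerivAt h
      (deriv f z * ((1 - φ z) / (z * (1 + c * φ z))) + f z *
        ((-(deriv φ z) * (z * (1 + c * φ z)) -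
        (1 - φ z) * (1 * (1 + c * φ z) + z * (c * deriv φ z))) / (z * (1 + c * φ z))^2)) z :=
    hfz'.mul hq
  have e1 : deriv (deriv f) z = deriv h z := hev.deriv_eq
  have e2 := hH.deriv
  have e3 : deriv f z = f z * ((1 - φ z) / (z * (1 + c * φ z))) := by
    have he := heq z hz hz0
    rw [div_eq_iff hfz] at he
    rw [he]; ring
  have main : deriv (deriv f) z / deriv f z =
      -(((1 + c) * φ z) / (z * (1 + c * φ z))) -
        ((1 + c) * deriv φ z) / ((1 - φ z) * (1 + c * φ z)) := by
    rw [e1, e2, e3]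
    field_simp
    ring
  -- norm estimates
  set r := ‖z‖ with hr_def
  set p := ‖φ z‖ with hp_def
  set k := |1 - 2*α| with hk_def
  set d := ‖deriv φ z‖ with hd_def
  set A := ‖(1:ℂ) - φ z‖ with hA_def
  set B := ‖(1:ℂ) + c * φ z‖ with hB_def
  have hr0 : 0 < r := by rw [hr_def]; exact norm_pos_iff.mpr hz0
  have hr1 : r < 1 := hz
  have hp1 : p < 1 := hφz1
  have hp0 : (0:ℝ) ≤ p := norm_nonneg _
  have hd0 : (0:ℝ) ≤ d := norm_nonneg _
  have hA1 : 1 - p ≤ A := by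
    have := norm_sub_norm_le (1:ℂ) (φ z)
    simpa using this
  have hB1 : 1 - k*p ≤ B := by
    have := norm_sub_norm_le (1:ℂ) (-(c * φ z))
    simp only [norm_neg, norm_mul, norm_one, sub_neg_eq_add] at this
    rw [hck] at this
    exact this
  have hkr : 0 < 1 - k*r := by nlinarith
  have hB' : 1 - k*r ≤ B := by nlinarith
  have hApos : 0 < A := by linarith
  have hBpos : 0 < B := by linarith
  have h1c : ‖(1:ℂ) + c‖ = 2*(1-α) := by
    have : (1:ℂ) + c = ((2 - 2*α : ℝ) : ℂ) := by rw [hc_real]; push_cast; ring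
    rw [this, Complex.norm_real, Real.norm_eq_abs, abs_of_pos (by linarith)]
    ring
  have hr2 : 0 < 1 - r^2 := by nlinarith
  -- bound term 1
  have hT1 : ‖((1 + c) * φ z) / (z * (1 + c * φ z))‖ ≤ 2*(1-α)/(1 - k*r) := by
    rw [norm_div, norm_mul, norm_mul, h1c, ← hr_def, ← hp_def, ← hB_def]
    rw [div_le_div_iff₀ (mul_pos hr0 hBpos) hkr]
    have key : p * (1 - k*r) ≤ r * B := by
      nlinarith [mul_le_mul_of_nonneg_right hschwarz hkr.le,
        mul_le_mul_of_nonneg_left hB' hr0.le]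
    nlinarith
  -- bound term 2
  have hT2 : ‖((1 + c) * deriv φ z) / ((1 - φ z) * (1 + c * φ z))‖ ≤
      2*(1-α)*(1+r)/((1 - k*r)*(1 - r^2)) := by
    rw [norm_div, norm_mul, norm_mul, h1c, ← hd_def, ← hA_def, ← hB_def]
    rw [div_le_div_iff₀ (mul_pos hApos hBpos) (mul_pos hkr hr2)]
    have s1 : d*(1-r^2) ≤ (1-p)*(1+p) := by nlinarith
    have s2 : (1-p)*(1+p) ≤ A*(1+p) := mul_le_mul_of_nonneg_right hA1 (by linarith)
    have s3 : A*(1+p) ≤ A*(1+r) := mul_le_mul_of_nonneg_left (by linarith) hApos.le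
    have s4 : d*(1-r^2)*(1-k*r) ≤ (A*(1+r))*B := by
      have l1 : d*(1-r^2)*(1-k*r) ≤ (A*(1+r))*(1-k*r) :=
        mul_le_mul_of_nonneg_right (by linarith) hkr.le
      have l2 : (A*(1+r))*(1-k*r) ≤ (A*(1+r))*B :=
        mul_le_mul_of_nonneg_left hB' (mul_nonneg hApos.le (by linarith))
      linarith
    nlinarith [mul_le_mul_of_nonneg_left s4 (show (0:ℝ) ≤ 2*(1-α) by linarith)]
  calc ‖deriv (deriv f) z / deriv f z‖
      = ‖(((1 + c) * φ z) / (z * (1 + c * φ z))) +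
          ((1 + c) * deriv φ z) / ((1 - φ z) * (1 + c * φ z))‖ := by
        rw [main, ← norm_neg]; congr 1; ring
    _ ≤ ‖((1 + c) * φ z) / (z * (1 + c * φ z))‖ +
          ‖((1 + c) * deriv φ z) / ((1 - φ z) * (1 + c * φ z))‖ := norm_add_le _ _
    _ ≤ 2*(1-α)/(1 - k*r) + 2*(1-α)*(1+r)/((1 - k*r)*(1 - r^2)) := add_le_add hT1 hT2
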